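/- arXiv:1304.5459 — 6 statements merged into one kernel-verified Lean document; each statement's English description precedes it below -/
import Mathlib

section
/- Let $M$ be a real symmetric $n \times n$ matrix, $U$ a real symmetric positive semi-definite $n \times n$ matrix, $\beta > 0$, and let $L = \begin{pmatrix} 0 & I \\ M & -2\beta U \end{pmatrix}$ acting on $\mathbb{C}^n \times \mathbb{C}^n$. If $\lambda$ is an eigenvalue of $L$ with $\mathrm{Re}(\lambda) = 0$ and $\mathrm{Im}(\lambda) \neq 0$, then $\lambda^2$ is a negative real eigenvalue of $M$ and any associated eigenvector $(x, v)$ of $L$ satisfies $Ux = 0$ and $Mx = \lambda^2 x$. -/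
/-!
Eliminating `v = λ x` turns the eigenvalue equation into `M x - 2βλ U x = λ² x`. Pair it with `x`:
`x* M x` and `λ² x* x` are real, whereas `2βλ x* U x` is purely imaginary because `λ ∈ iℝ` and
`x* U x ≥ 0`. Hence `x* U x = 0`, so `U x = 0` by positive semidefiniteness, and then `M x = λ² x`.
-/

open Matrix Complex
open scoped ComplexOrder MatrixOrder

namespace Matrix

lemma IsSymm.isHermitian_map_ofReal {n : Type*} {M : Matrix n n ℝ} (hM : M.IsSymm) :
    (M.map ((↑) : ℝ → ℂ)).IsHermitian :=
  (isHermitian_iff_isSymm.mpr hM).map _ fun a ↦ (conj_ofReal a).symm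

lemma PosSemidef.map_ofReal {n : Type*} [Fintype n] {U : Matrix n n ℝ} (hU : U.PosSemidef) :
    (U.map ((↑) : ℝ → ℂ)).PosSemidef := by
  classical
  obtain ⟨B, rfl⟩ := CStarAlgebra.nonneg_iff_eq_star_mul_self.mp hU.nonneg
  rw [star_eq_conjTranspose, show ((↑) : ℝ → ℂ) = ofRealHom from rfl, Matrix.map_mul,
    conjTranspose_map (⇑ofRealHom) fun a ↦ (conj_ofReal a).symm]
  exact posSemidef_conjTranspose_mul_self _

lemma fromBlocks_zero_one_mulVec_eq_smul_iff {n R : Type*} [Fintype n] [CommRing R] [DecidableEq n]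
    (A B : Matrix n n R) (μ : R) (x v : n → R) :
    fromBlocks 0 1 A B *ᵥ Sum.elim x v = μ • Sum.elim x v ↔
      v = μ • x ∧ A *ᵥ x + μ • (B *ᵥ x) = μ ^ 2 • x := by
  have hsmul : μ • Sum.elim x v = Sum.elim (μ • x) (μ • v) := by
    ext (i | i) <;> rfl
  rw [fromBlocks_mulVec, hsmul, Sum.elim_eq_iff]
  simp only [Sum.elim_comp_inl, Sum.elim_comp_inr, zero_mulVec, one_mulVec, zero_add]
  refine and_congr_right fun hv ↦ ?_
  rw [hv, mulVec_smul, pow_two, mul_smul]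

lemma PosSemidef.mulVec_eq_zero_of_quadratic_eigenvector {n : Type*} [Fintype n]
    {A U : Matrix n n ℂ} (hA : A.IsHermitian) (hU : U.PosSemidef) {c : ℝ} (hc : c ≠ 0)
    {μ : ℂ} (hre : μ.re = 0) (him : μ.im ≠ 0) {x : n → ℂ}
    (h : A *ᵥ x + μ • (-((c : ℂ) • U) *ᵥ x) = μ ^ 2 • x) : U *ᵥ x = 0 := by
  classical
  set s := star x ⬝ᵥ U *ᵥ x
  have hform : star x ⬝ᵥ A *ᵥ x - μ * c * s = μ ^ 2 * (star x ⬝ᵥ x) := by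
    have := congrArg (star x ⬝ᵥ ·) h
    simp only [dotProduct_add, dotProduct_smul, neg_mulVec, smul_mulVec, dotProduct_neg] at this
    simpa [s, smul_eq_mul, mul_assoc, sub_eq_add_neg] using this
  have hAx : (star x ⬝ᵥ A *ᵥ x).im = 0 := hA.im_star_dotProduct_mulVec_self x
  have hxx : (star x ⬝ᵥ x).im = 0 := by
    simpa using isHermitian_one.im_star_dotProduct_mulVec_self x
  have hs : s.im = 0 := (hU.dotProduct_mulVec_nonneg x).2.symm
  have hμ2 : (μ ^ 2).im = 0 := by simp [pow_two, hre]
  have hsre : s.re = 0 := by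
    simpa [mul_im, hAx, hxx, hs, hμ2, hre, him, hc] using congrArg im hform
  exact (hU.dotProduct_mulVec_zero_iff x).mp (Complex.ext hsre hs)

end Matrix

theorem stmt_8 (n : ℕ) (M U : Matrix (Fin n) (Fin n) ℝ)
    (hM : M.IsSymm) (hU : U.PosSemidef) (β : ℝ) (hβ : 0 < β)
    (Mc Uc : Matrix (Fin n) (Fin n) ℂ)
    (hMc : Mc = M.map Complex.ofReal) (hUc : Uc = U.map Complex.ofReal)
    (L : Matrix (Fin n ⊕ Fin n) (Fin n ⊕ Fin n) ℂ)
    (hL : L = Matrix.fromBlocks 0 1 Mc (-((2 * β : ℂ) • Uc)))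
    (lam : ℂ) (hre : lam.re = 0) (him : lam.im ≠ 0)
    (x v : Fin n → ℂ) (hxv : Sum.elim x v ≠ 0)
    (heig : L.mulVec (Sum.elim x v) = lam • Sum.elim x v) :
    x ≠ 0 ∧ (lam ^ 2).im = 0 ∧ (lam ^ 2).re < 0 ∧
      Uc.mulVec x = 0 ∧ Mc.mulVec x = lam ^ 2 • x := by
  subst hMc hUc hL
  obtain ⟨rfl, hquad⟩ := (fromBlocks_zero_one_mulVec_eq_smul_iff _ _ lam x v).mp heig
  have hx : x ≠ 0 := by
    rintro rfl
    exact hxv (by ext (i | i) <;> simp)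
  rw [show (2 * β : ℂ) = ((2 * β : ℝ) : ℂ) by push_cast; rfl] at hquad
  have hUx := hU.map_ofReal.mulVec_eq_zero_of_quadratic_eigenvector hM.isHermitian_map_ofReal
    (by positivity) hre him hquad
  refine ⟨hx, by simp [pow_two, hre], by simpa [pow_two, hre] using mul_self_pos.mpr him, hUx, ?_⟩
  simpa [neg_mulVec, smul_mulVec, hUx] using hquad
end

section
/- Let $M$ be a Hermitian $n \times n$ matrix, $U$ positive semi-definite Hermitian, $\beta > 0$, $L = \begin{pmatrix} 0 & I \\ M & -2\beta U \end{pmatrix}$, and suppose $(x, \lambda x)$ is an eigenvector of $L$ with $\lambda$ purely imaginary nonzero, $x^* x = 1$, and $Ux = 0$. Then there is no generalized eigenvector at this eigenvector: the system $(L - \lambda I)(u, w) = (x, \lambda x)$ has no solution $(u, w)$. -/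
/-! Eliminating `w = x + λu`, a Jordan chain gives `(M + λD - λ²) u = 2λx - Dx` with
`D = -2βU`. Pairing with `x*` kills the left side, because `x*` is a left eigenvector of `M`
for the real eigenvalue `λ²` and of the Hermitian `D` for `0`; what remains is `2λ = 0`. -/

open Matrix Complex ComplexOrder

namespace Matrix

variable {R n : Type*} [Fintype n]

section CommRing

variable [DecidableEq n] [CommRing R] {M D : Matrix n n R} {x u w : n → R} {μ : R}

theorem fromBlocks_zero_one_mulVec_sumElim (M D : Matrix n n R) (u w : n → R) :
    fromBlocks 0 1 M D *ᵥ Sum.elim u w = Sum.elim w (M *ᵥ u + D *ᵥ w) := by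
  simp [fromBlocks_mulVec]

theorem mulVec_add_smul_mulVec_of_fromBlocks_eigen
    (h : fromBlocks 0 1 M D *ᵥ Sum.elim x (μ • x) = μ • Sum.elim x (μ • x)) :
    M *ᵥ x + μ • D *ᵥ x = (μ * μ) • x := by
  rw [fromBlocks_zero_one_mulVec_sumElim] at h
  funext i
  simpa [mulVec_smul, smul_smul, mul_assoc] using congrFun h (Sum.inr i)

/-- A Jordan chain `(x, μx), (u, w)` of the companion linearization of the quadratic pencil
`P(μ) = μ² - μD - M` gives `P(μ) u = P'(μ) x`. -/
theorem pencil_eq_of_fromBlocks_jordan_chain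
    (h : fromBlocks 0 1 M D *ᵥ Sum.elim u w - μ • Sum.elim u w = Sum.elim x (μ • x)) :
    M *ᵥ u + μ • D *ᵥ u - (μ * μ) • u = (2 * μ) • x - D *ᵥ x := by
  rw [fromBlocks_zero_one_mulVec_sumElim] at h
  have hw : w = x + μ • u := by
    funext i
    have := congrFun h (Sum.inl i)
    simp only [Pi.sub_apply, Pi.smul_apply, Sum.elim_inl, smul_eq_mul] at this
    simp only [Pi.add_apply, Pi.smul_apply, smul_eq_mul]
    linear_combination this
  subst hw
  funext i
  have := congrFun h (Sum.inr i)
  simp only [Pi.sub_apply, Pi.add_apply, Pi.smul_apply, Sum.elim_inr, smul_eq_mul, mulVec_add,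
    mulVec_smul] at this ⊢
  linear_combination this

end CommRing

section StarRing

variable [CommRing R] [StarRing R] {A M D : Matrix n n R} {x u w : n → R} {μ : R}

theorem IsHermitian.star_dotProduct_mulVec_of_mulVec_eq_smul (hA : A.IsHermitian)
    (hμ : IsSelfAdjoint μ) (hx : A *ᵥ x = μ • x) (v : n → R) :
    star x ⬝ᵥ (A *ᵥ v) = μ * (star x ⬝ᵥ v) := by
  have hxA : star x ᵥ* A = μ • star x := by
    rw [← hA.eq, ← star_mulVec, hx, star_smul, hμ.star_eq]
  rw [dotProduct_mulVec, hxA, smul_dotProduct, smul_eq_mul]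

theorem two_mul_mul_star_dotProduct_self_eq_zero_of_fromBlocks_jordan_chain [DecidableEq n]
    (hM : M.IsHermitian) (hD : D.IsHermitian) (hDx : D *ᵥ x = 0) (hμ : IsSelfAdjoint (μ * μ))
    (heig : fromBlocks 0 1 M D *ᵥ Sum.elim x (μ • x) = μ • Sum.elim x (μ • x))
    (hchain : fromBlocks 0 1 M D *ᵥ Sum.elim u w - μ • Sum.elim u w = Sum.elim x (μ • x)) :
    2 * μ * (star x ⬝ᵥ x) = 0 := by
  have hMx : M *ᵥ x = (μ * μ) • x := by
    simpa [hDx] using mulVec_add_smul_mulVec_of_fromBlocks_eigen heig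
  have hpencil := congrArg (star x ⬝ᵥ ·) (pencil_eq_of_fromBlocks_jordan_chain hchain)
  simp only [dotProduct_sub, dotProduct_add, dotProduct_smul, smul_eq_mul,
    hM.star_dotProduct_mulVec_of_mulVec_eq_smul hμ hMx,
    hD.star_dotProduct_mulVec_of_mulVec_eq_smul (IsSelfAdjoint.zero R) (by simpa using hDx),
    hDx, dotProduct_zero] at hpencil
  linear_combination -hpencil

end StarRing

end Matrix

theorem stmt_10_general (n : ℕ) (M U : Matrix (Fin n) (Fin n) ℂ)
    (hM : M.IsHermitian) (hU : U.PosSemidef) (β : ℝ)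
    (L : Matrix (Fin n ⊕ Fin n) (Fin n ⊕ Fin n) ℂ)
    (hL : L = Matrix.fromBlocks 0 1 M (-((2 * β : ℂ) • U)))
    (lam : ℂ) (hre : lam.re = 0) (hlam : lam ≠ 0)
    (x : Fin n → ℂ) (hx : star x ⬝ᵥ x = 1) (hker : U.mulVec x = 0)
    (heig : L.mulVec (Sum.elim x (lam • x)) = lam • Sum.elim x (lam • x)) :
    ¬ ∃ u w : Fin n → ℂ,
      L.mulVec (Sum.elim u w) - lam • Sum.elim u w = Sum.elim x (lam • x) := by
  rintro ⟨u, w, hchain⟩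
  subst hL
  have hD : (-((2 * β : ℂ) • U)).IsHermitian :=
    (hU.isHermitian.smul (by simp [IsSelfAdjoint, ← ofReal_ofNat, ← ofReal_mul])).neg
  have hDx : (-((2 * β : ℂ) • U)) *ᵥ x = 0 := by simp [neg_mulVec, smul_mulVec, hker]
  have hsq : IsSelfAdjoint (lam * lam) := by
    have hconj : star lam = -lam := Complex.ext (by simp [hre]) (by simp)
    rw [IsSelfAdjoint, star_mul', hconj, neg_mul_neg]
  have h2lam :=
    two_mul_mul_star_dotProduct_self_eq_zero_of_fromBlocks_jordan_chain hM hD hDx hsq heig hchain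
  rw [hx, mul_one, mul_eq_zero] at h2lam
  exact hlam (h2lam.resolve_left two_ne_zero)

theorem stmt_10 (n : ℕ) (M U : Matrix (Fin n) (Fin n) ℂ)
    (hM : M.IsHermitian) (hU : U.PosSemidef) (β : ℝ) (hβ : 0 < β)
    (L : Matrix (Fin n ⊕ Fin n) (Fin n ⊕ Fin n) ℂ)
    (hL : L = Matrix.fromBlocks 0 1 M (-((2 * β : ℂ) • U)))
    (lam : ℂ) (hre : lam.re = 0) (hlam : lam ≠ 0)
    (x : Fin n → ℂ) (hx : star x ⬝ᵥ x = 1) (hker : U.mulVec x = 0)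
    (heig : L.mulVec (Sum.elim x (lam • x)) = lam • Sum.elim x (lam • x)) :
    ¬ ∃ u w : Fin n → ℂ,
      L.mulVec (Sum.elim u w) - lam • Sum.elim u w = Sum.elim x (lam • x) :=
  stmt_10_general n M U hM hU β L hL lam hre hlam x hx hker heig
end

section
/- Let $M$ be a Hermitian $n \times n$ matrix, $U$ positive semi-definite Hermitian, $\beta > 0$, and $L = \begin{pmatrix} 0 & I \\ M & -2\beta U \end{pmatrix}$. Suppose $Mx = 0$, $x^* x = 1$, and $Ux \neq 0$. Then the equation $L(u, w) = (x, 0)$ has no solution $(u, w) \in \mathbb{C}^n \times \mathbb{C}^n$ (i.e., $(x, 0)$ generates no generalized eigenvector at eigenvalue $0$). -/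
open Matrix Complex ComplexOrder

/-!
If `L (u, w) = (x, 0)`, the first block row forces `w = x` and the second gives
`M u = 2β U x`. Pairing with `x`, Hermitian symmetry and `M x = 0` kill the left side, so
`x* U x = 0`, and for positive semidefinite `U` this means `U x = 0`.
-/

namespace Matrix

variable {ι : Type*} [Fintype ι]

theorem fromBlocks_zero_one_mulVec_eq_sumElim_zero_iff {α : Type*} [NonAssocSemiring α]
    [DecidableEq ι] (C D : Matrix ι ι α) (u w x : ι → α) :
    fromBlocks 0 1 C D *ᵥ Sum.elim u w = Sum.elim x 0 ↔ w = x ∧ C *ᵥ u + D *ᵥ x = 0 := by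
  rw [fromBlocks_mulVec, zero_mulVec, zero_add, one_mulVec, Sum.elim_comp_inl,
    Sum.elim_comp_inr, Sum.elim_eq_iff]
  constructor <;> rintro ⟨rfl, h⟩ <;> exact ⟨rfl, h⟩

variable {𝕜 : Type*} [RCLike 𝕜]

theorem IsHermitian.star_dotProduct_mulVec_eq_zero_of_mulVec_eq_zero {M : Matrix ι ι 𝕜}
    (hM : M.IsHermitian) {x : ι → 𝕜} (hx : M *ᵥ x = 0) (u : ι → 𝕜) :
    star x ⬝ᵥ M *ᵥ u = 0 := by
  rw [dotProduct_mulVec, ← hM.eq, ← star_mulVec, hx, star_zero, zero_dotProduct]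

theorem IsHermitian.mulVec_ne_smul_mulVec_of_mulVec_eq_zero {M U : Matrix ι ι 𝕜}
    (hM : M.IsHermitian) (hU : U.PosSemidef) {c : 𝕜} (hc : c ≠ 0) {x : ι → 𝕜}
    (hx : M *ᵥ x = 0) (hUx : U *ᵥ x ≠ 0) (u : ι → 𝕜) :
    M *ᵥ u ≠ c • U *ᵥ x := by
  intro hu
  have hxUx : star x ⬝ᵥ U *ᵥ x = 0 := by
    have := hM.star_dotProduct_mulVec_eq_zero_of_mulVec_eq_zero hx u
    rw [hu, dotProduct_smul, smul_eq_mul] at this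
    exact (mul_eq_zero.mp this).resolve_left hc
  exact hUx ((hU.dotProduct_mulVec_zero_iff x).mp hxUx)

end Matrix

theorem stmt_12_general (n : ℕ) (M U : Matrix (Fin n) (Fin n) ℂ)
    (hM : M.IsHermitian) (hU : U.PosSemidef) (β : ℝ) (hβ : 0 < β)
    (L : Matrix (Fin n ⊕ Fin n) (Fin n ⊕ Fin n) ℂ)
    (hL : L = Matrix.fromBlocks 0 1 M (-((2 * β : ℂ) • U)))
    (x : Fin n → ℂ) (hker : M.mulVec x = 0)
    (hUx : U.mulVec x ≠ 0) :
    ¬ ∃ u w : Fin n → ℂ, L.mulVec (Sum.elim u w) = Sum.elim x 0 := by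
  rintro ⟨u, w, h⟩
  rw [hL, fromBlocks_zero_one_mulVec_eq_sumElim_zero_iff] at h
  have hMu : M *ᵥ u = (2 * β : ℂ) • U *ᵥ x := by
    rw [← sub_eq_zero, sub_eq_add_neg, ← smul_mulVec, ← neg_mulVec]
    exact h.2
  have h2β : (2 * β : ℂ) ≠ 0 := by exact_mod_cast (mul_pos two_pos hβ).ne'
  exact hM.mulVec_ne_smul_mulVec_of_mulVec_eq_zero hU h2β hker hUx u hMu

theorem stmt_12 (n : ℕ) (M U : Matrix (Fin n) (Fin n) ℂ)
    (hM : M.IsHermitian) (hU : U.PosSemidef) (β : ℝ) (hβ : 0 < β)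
    (L : Matrix (Fin n ⊕ Fin n) (Fin n ⊕ Fin n) ℂ)
    (hL : L = Matrix.fromBlocks 0 1 M (-((2 * β : ℂ) • U)))
    (x : Fin n → ℂ) (hker : M.mulVec x = 0) (hx : star x ⬝ᵥ x = 1)
    (hUx : U.mulVec x ≠ 0) :
    ¬ ∃ u w : Fin n → ℂ, L.mulVec (Sum.elim u w) = Sum.elim x 0 :=
  stmt_12_general n M U hM hU β hβ L hL x hker hUx
end

section
/- Let $M$ be a real symmetric $n \times n$ matrix with largest eigenvalue $\mu_1 \leq 0$, $U$ a positive semi-definite symmetric matrix, and $\beta \geq 0$. Then every eigenvalue $\lambda \in \mathbb{C}$ of the block matrix $L = \begin{pmatrix} 0 & I \\ M & -2\beta U \end{pmatrix}$ satisfies $\mathrm{Re}(\lambda) \leq 0$. -/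
/-!
If `L (x, y) = λ (x, y)` then `y = λ x` and `M x - 2βλ U x = λ² x` with `x ≠ 0`. Pairing with `x⋆`
gives `c λ² + 2β b λ - a = 0`, where `c = x⋆x > 0`, `b = x⋆Ux ≥ 0` and `-a = -x⋆Mx ≥ 0` are real
because `U` and `-M` stay positive semidefinite over `ℂ`. A quadratic with nonnegative real
coefficients and positive leading one has no root in the open right half-plane.
-/

open Matrix Complex
open scoped ComplexOrder

open scoped MatrixOrder in
theorem Matrix.PosSemidef.map_ofReal_s14 {n : Type*} [Fintype n] {A : Matrix n n ℝ}
    (hA : A.PosSemidef) : (A.map ofReal).PosSemidef := by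
  classical
  obtain ⟨B, rfl⟩ := CStarAlgebra.nonneg_iff_eq_star_mul_self.mp hA.nonneg
  have hmap : (star B * B).map ofReal = (B.map ofReal)ᴴ * B.map ofReal := by
    rw [← conjTranspose_map _ fun _ => (conj_ofReal _).symm]
    exact Matrix.map_mul (f := ofRealHom)
  rw [hmap]
  exact posSemidef_conjTranspose_mul_self _

theorem Complex.re_nonpos_of_quadratic_eq_zero {p q r z : ℂ} (hp : 0 < p) (hq : 0 ≤ q)
    (hr : 0 ≤ r) (h : p * z ^ 2 + q * z + r = 0) : z.re ≤ 0 := by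
  obtain ⟨hp, hp'⟩ := pos_iff.mp hp
  obtain ⟨hq, hq'⟩ := nonneg_iff.mp hq
  obtain ⟨hr, hr'⟩ := nonneg_iff.mp hr
  have hre := congrArg re h
  have him := congrArg im h
  simp only [add_re, add_im, mul_re, mul_im, sq, ← hp', ← hq', ← hr', zero_re, zero_im]
    at hre him
  by_contra! hz
  have hzim : z.im = 0 := by
    have : z.im * (2 * p.re * z.re + q.re) = 0 := by linear_combination him
    exact (mul_eq_zero.mp this).resolve_right (by positivity)
  rw [hzim] at hre
  nlinarith [mul_pos hp (mul_pos hz hz), mul_nonneg hq hz.le]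

theorem Matrix.exists_quadratic_eigenvector_of_fromBlocks_mulVec {m R : Type*} [Fintype m]
    [DecidableEq m] [CommRing R] {A B : Matrix m m R} {c : R} {z : m ⊕ m → R} (hz : z ≠ 0)
    (h : fromBlocks 0 1 A B *ᵥ z = c • z) :
    ∃ x ≠ 0, A *ᵥ x + c • (B *ᵥ x) = c ^ 2 • x := by
  obtain ⟨x, y, rfl⟩ : ∃ x y, z = Sum.elim x y :=
    ⟨z ∘ Sum.inl, z ∘ Sum.inr, by ext (i | i) <;> rfl⟩
  rw [fromBlocks_mulVec] at h
  have hy : y = c • x := funext fun i => by simpa using congrFun h (Sum.inl i)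
  have hx : A *ᵥ x + B *ᵥ y = c • y := funext fun i => by simpa using congrFun h (Sum.inr i)
  subst hy
  refine ⟨x, fun hx => hz ?_, ?_⟩
  · simp [hx]
  · rwa [pow_two, mul_smul, ← mulVec_smul]

theorem stmt_14_general (n : ℕ) (M U : Matrix (Fin n) (Fin n) ℝ)
    (hMneg : (-M).PosSemidef) (hU : U.PosSemidef)
    (β : ℝ) (hβ : 0 ≤ β)
    (L : Matrix (Fin n ⊕ Fin n) (Fin n ⊕ Fin n) ℂ)
    (hL : L = Matrix.fromBlocks 0 1 (M.map Complex.ofReal)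
      (-((2 * β : ℂ) • U.map Complex.ofReal))) :
    ∀ lam : ℂ, (∃ z : (Fin n ⊕ Fin n) → ℂ, z ≠ 0 ∧ L.mulVec z = lam • z) →
      lam.re ≤ 0 := by
  rintro lam ⟨z, hz, hLz⟩
  subst hL
  obtain ⟨x, hx, hquad⟩ := exists_quadratic_eigenvector_of_fromBlocks_mulVec hz hLz
  have hform := congrArg (star x ⬝ᵥ ·) hquad
  simp only [dotProduct_add, dotProduct_smul, neg_mulVec, smul_mulVec, dotProduct_neg,
    smul_eq_mul] at hform
  have h2β : (0 : ℂ) ≤ 2 * β := by exact_mod_cast mul_nonneg zero_le_two hβ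
  have hc : 0 < star x ⬝ᵥ x := dotProduct_star_self_pos_iff.mpr hx
  have hb : 0 ≤ 2 * β * (star x ⬝ᵥ U.map ofReal *ᵥ x) :=
    mul_nonneg h2β (hU.map_ofReal_s14.dotProduct_mulVec_nonneg x)
  have ha : 0 ≤ -(star x ⬝ᵥ M.map ofReal *ᵥ x) := by
    simpa only [Matrix.map_neg _ ofReal_neg, neg_mulVec, dotProduct_neg] using
      hMneg.map_ofReal_s14.dotProduct_mulVec_nonneg x
  exact re_nonpos_of_quadratic_eq_zero hc hb ha (by linear_combination -hform)

theorem stmt_14 (n : ℕ) (M U : Matrix (Fin n) (Fin n) ℝ)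
    (hM : M.IsSymm) (hMneg : (-M).PosSemidef) (hU : U.PosSemidef)
    (β : ℝ) (hβ : 0 ≤ β)
    (L : Matrix (Fin n ⊕ Fin n) (Fin n ⊕ Fin n) ℂ)
    (hL : L = Matrix.fromBlocks 0 1 (M.map Complex.ofReal)
      (-((2 * β : ℂ) • U.map Complex.ofReal))) :
    ∀ lam : ℂ, (∃ z : (Fin n ⊕ Fin n) → ℂ, z ≠ 0 ∧ L.mulVec z = lam • z) →
      lam.re ≤ 0 :=
  stmt_14_general n M U hMneg hU β hβ L hL
end

section
/- Let $M$ be a real symmetric $n \times n$ matrix and $G$ a real symmetric positive semi-definite $n \times n$ matrix with $\ker G \subseteq \ker M$. Let $L = \begin{pmatrix} 0 & I \\ M & -G \end{pmatrix}$. Then any eigenvalue $\lambda$ of $L$ with $\mathrm{Re}(\lambda) = 0$ must satisfy $\lambda = 0$; moreover $\ker L = \ker M \times \{0\}$, i.e., $(x, v) \in \ker L$ iff $v = 0$ and $Mx = 0$. -/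
/-!
An eigenvector `(x, v)` of `L` for `λ` has `v = λ x` and `M x - λ G x = λ² x`. Pairing with `x`
gives `x*Mx - λ x*Gx = λ² x*x`, where all three forms are real; for `λ = i t` the imaginary part
reads `t · x*Gx = 0`. If `t ≠ 0`, then `x*Gx = 0`, so `Gx = 0` as `G ⪰ 0`, so `Mx = 0` as
`ker G ⊆ ker M`, leaving `λ² x = 0` with `x ≠ 0`, i.e. `λ = 0`.
-/

open Matrix Complex
open scoped ComplexOrder

namespace Matrix

variable {n : Type*}

lemma IsSymm.isHermitian_map_ofReal_s17 {A : Matrix n n ℝ} (hA : A.IsSymm) :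
    (A.map ofReal).IsHermitian :=
  (isHermitian_iff_isSymm.mpr hA).map _ fun _ => (conj_ofReal _).symm

variable [Fintype n]

lemma re_mulVec_map_ofReal (A : Matrix n n ℝ) (x : n → ℂ) (i : n) :
    ((A.map ofReal *ᵥ x) i).re = (A *ᵥ fun j => (x j).re) i := by
  simp [mulVec, dotProduct, re_sum]

lemma im_mulVec_map_ofReal (A : Matrix n n ℝ) (x : n → ℂ) (i : n) :
    ((A.map ofReal *ᵥ x) i).im = (A *ᵥ fun j => (x j).im) i := by
  simp [mulVec, dotProduct, im_sum]

lemma mulVec_map_ofReal_eq_zero_iff (A : Matrix n n ℝ) (x : n → ℂ) :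
    A.map ofReal *ᵥ x = 0 ↔ A *ᵥ (fun j => (x j).re) = 0 ∧ A *ᵥ (fun j => (x j).im) = 0 := by
  simp only [funext_iff, Complex.ext_iff, re_mulVec_map_ofReal, im_mulVec_map_ofReal,
    Pi.zero_apply, zero_re, zero_im, forall_and]

lemma mulVec_map_ofReal_eq_zero_of_ker_le {A B : Matrix n n ℝ}
    (hker : ∀ y, A *ᵥ y = 0 → B *ᵥ y = 0) {x : n → ℂ} (hx : A.map ofReal *ᵥ x = 0) :
    B.map ofReal *ᵥ x = 0 := by
  rw [mulVec_map_ofReal_eq_zero_iff] at hx ⊢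
  exact ⟨hker _ hx.1, hker _ hx.2⟩

lemma PosSemidef.map_ofReal_s17 {A : Matrix n n ℝ} (hA : A.PosSemidef) :
    (A.map ofReal).PosSemidef := by
  classical
  open scoped MatrixOrder in
  obtain ⟨B, rfl⟩ := CStarAlgebra.nonneg_iff_eq_star_mul_self.mp hA.nonneg
  change ((Bᴴ * B).map ofRealHom).PosSemidef
  rw [Matrix.map_mul, conjTranspose_map ofRealHom fun _ => (conj_ofReal _).symm]
  exact posSemidef_conjTranspose_mul_self _

section Linearization

variable {R : Type*} [CommRing R] [DecidableEq n] (A B : Matrix n n R)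

lemma fromBlocks_zero_one_mulVec_sum_elim (x v : n → R) :
    fromBlocks 0 (1 : Matrix n n R) A (-B) *ᵥ Sum.elim x v = Sum.elim v (A *ᵥ x - B *ᵥ v) := by
  simp [fromBlocks_mulVec, sub_eq_add_neg, neg_mulVec]

lemma fromBlocks_zero_one_mulVec_eq_zero_iff (x v : n → R) :
    fromBlocks 0 (1 : Matrix n n R) A (-B) *ᵥ Sum.elim x v = 0 ↔ v = 0 ∧ A *ᵥ x = 0 := by
  rw [fromBlocks_zero_one_mulVec_sum_elim, ← Sum.elim_zero_zero, Sum.elim_eq_iff]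
  exact and_congr_right fun hv => by simp [hv]

lemma exists_quadratic_eigenvector_of_fromBlocks {lam : R}
    (h : ∃ z, z ≠ 0 ∧ fromBlocks 0 (1 : Matrix n n R) A (-B) *ᵥ z = lam • z) :
    ∃ x, x ≠ 0 ∧ A *ᵥ x - lam • B *ᵥ x = lam ^ 2 • x := by
  obtain ⟨z, hz, hLz⟩ := h
  obtain ⟨x, v, rfl⟩ : ∃ x v, z = Sum.elim x v := ⟨_, _, (Sum.elim_comp_inl_inr z).symm⟩
  rw [fromBlocks_zero_one_mulVec_sum_elim, show lam • Sum.elim x v = Sum.elim (lam • x) (lam • v)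
    from Sum.comp_elim (lam • ·) x v, Sum.elim_eq_iff] at hLz
  obtain ⟨rfl, hv⟩ := hLz
  refine ⟨x, fun hx => hz ?_, ?_⟩
  · simp [hx]
  · rwa [mulVec_smul, smul_smul, ← sq] at hv

end Linearization

lemma eq_zero_or_dotProduct_mulVec_eq_zero_of_re_eq_zero {A B : Matrix n n ℂ}
    (hA : A.IsHermitian) (hB : B.IsHermitian) {x : n → ℂ} {lam : ℂ}
    (hx : A *ᵥ x - lam • B *ᵥ x = lam ^ 2 • x) (hre : lam.re = 0) :
    lam = 0 ∨ star x ⬝ᵥ B *ᵥ x = 0 := by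
  have hform : star x ⬝ᵥ A *ᵥ x - lam * star x ⬝ᵥ B *ᵥ x = lam ^ 2 * star x ⬝ᵥ x := by
    simpa [dotProduct_sub, dotProduct_smul] using congrArg (star x ⬝ᵥ ·) hx
  have hAim : (star x ⬝ᵥ A *ᵥ x).im = 0 := hA.im_star_dotProduct_mulVec_self x
  have hBim : (star x ⬝ᵥ B *ᵥ x).im = 0 := hB.im_star_dotProduct_mulVec_self x
  have hnorm : (star x ⬝ᵥ x).im = 0 := (nonneg_iff.mp (dotProduct_star_self_nonneg x)).2.symm
  have key : lam.im * (star x ⬝ᵥ B *ᵥ x).re = 0 := by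
    have := congrArg im hform
    simp only [sq, sub_im, mul_im, mul_re, hre, hAim, hBim, hnorm] at this
    linarith
  exact (mul_eq_zero.mp key).imp (Complex.ext hre ·) (Complex.ext · hBim)

end Matrix

theorem stmt_17 (n : ℕ) (M G : Matrix (Fin n) (Fin n) ℝ)
    (hM : M.IsSymm) (hG : G.PosSemidef)
    (hker : ∀ y : Fin n → ℝ, G.mulVec y = 0 → M.mulVec y = 0)
    (Mc Gc : Matrix (Fin n) (Fin n) ℂ)
    (hMc : Mc = M.map Complex.ofReal) (hGc : Gc = G.map Complex.ofReal)
    (L : Matrix (Fin n ⊕ Fin n) (Fin n ⊕ Fin n) ℂ)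
    (hL : L = Matrix.fromBlocks 0 1 Mc (-Gc)) :
    (∀ lam : ℂ, (∃ z : (Fin n ⊕ Fin n) → ℂ, z ≠ 0 ∧ L.mulVec z = lam • z) →
        lam.re = 0 → lam = 0) ∧
    (∀ x v : Fin n → ℂ,
        L.mulVec (Sum.elim x v) = 0 ↔ (v = 0 ∧ Mc.mulVec x = 0)) := by
  subst hMc hGc hL
  refine ⟨fun lam hlam hre => ?_, fromBlocks_zero_one_mulVec_eq_zero_iff _ _⟩
  obtain ⟨x, hx0, hx⟩ := exists_quadratic_eigenvector_of_fromBlocks _ _ hlam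
  have hGpsd := hG.map_ofReal_s17
  refine (eq_zero_or_dotProduct_mulVec_eq_zero_of_re_eq_zero hM.isHermitian_map_ofReal_s17
    hGpsd.isHermitian hx hre).elim id fun hb => ?_
  have hGx : G.map ofReal *ᵥ x = 0 := (hGpsd.dotProduct_mulVec_zero_iff x).mp hb
  rw [mulVec_map_ofReal_eq_zero_of_ker_le hker hGx, hGx, smul_zero, sub_zero, eq_comm,
    smul_eq_zero] at hx
  exact (pow_eq_zero_iff two_ne_zero).mp (hx.resolve_right hx0)
end

section
/- Let $x_j = R e^{2\pi i j / N}$, $j = 1, \ldots, N$, be equally spaced points on a circle of radius $R > 0$, and let $\tilde{k}: (0,\infty) \to \mathbb{R}$ be differentiable. Then for each $j$, $\sum_{l \neq j} \tilde{k}'(|x_j - x_l|) \frac{x_j - x_l}{|x_j - x_l|} = 0$ for all $j$ if and only if $\sum_{p=1}^{N-1} \sin\left(\frac{p\pi}{N}\right) \tilde{k}'\left(2R \sin\left(\frac{p\pi}{N}\right)\right) = 0$. -/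
/-!
Writing `θ_p = pπ/N`, we have `x_{j+p} = x_j e^{2iθ_p}` and
`1 - e^{2iθ} = 2 sin θ (sin θ - i cos θ)`, where the last factor is a unit vector. Reindexing the
sum over `l ≠ j` by `p ≡ l - j (mod N)`, the force on `x_j` becomes
`(x_j / R) ∑_p k̃'(2R sin θ_p) (sin θ_p - i cos θ_p)`. The cosine part cancels under `p ↦ N - p`,
so the force is `(x_j / R)` times the real sum in the statement.
-/

open Real Complex Finset

theorem Function.Periodic.sum_erase_Icc {M : Type*} [AddCommMonoid M] {f : ℕ → M} {N : ℕ}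
    (hf : Function.Periodic f N) {j : ℕ} (hj : j ∈ Icc 1 N) :
    ∑ l ∈ (Icc 1 N).erase j, f l = ∑ p ∈ Icc 1 (N - 1), f (j + p) := by
  rw [mem_Icc] at hj
  refine sum_nbij' (fun l => if j < l then l - j else l + N - j)
    (fun p => if p + j ≤ N then p + j else p + j - N) ?_ ?_ ?_ ?_ ?_ <;>
    intro l hl <;> simp only [mem_erase, mem_Icc] at hl ⊢
  all_goals try (split_ifs <;> omega)
  split_ifs
  · congr 1; omega
  · rw [show j + (l + N - j) = l + N by omega, hf]

theorem sum_Icc_cos_mul_sin_eq_zero (N : ℕ) (g : ℝ → ℝ) :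
    ∑ p ∈ Icc 1 (N - 1), Real.cos (p * π / N) * g (Real.sin (p * π / N)) = 0 := by
  have hreflect : ∑ p ∈ Icc 1 (N - 1), Real.cos (p * π / N) * g (Real.sin (p * π / N)) =
      ∑ p ∈ Icc 1 (N - 1), -(Real.cos (p * π / N) * g (Real.sin (p * π / N))) := by
    refine sum_nbij' (fun p => N - p) (fun p => N - p) ?_ ?_ ?_ ?_ ?_ <;>
      intro p hp <;> simp only [mem_Icc] at hp ⊢
    all_goals try omega
    have hN : (N : ℝ) ≠ 0 := by norm_cast; omega
    rw [Nat.cast_sub (by omega), sub_mul, sub_div, mul_div_cancel_left₀ π hN,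
      Real.cos_pi_sub, Real.sin_pi_sub, neg_mul, neg_neg]
  rw [sum_neg_distrib] at hreflect
  linarith

theorem one_sub_exp_two_mul_I (θ : ℝ) :
    1 - exp (2 * θ * I) = 2 * Real.sin θ * (Real.sin θ - Real.cos θ * I) := by
  rw [show (2 * θ : ℂ) * I = ((2 * θ : ℝ) : ℂ) * I by push_cast; ring, exp_mul_I,
    ← ofReal_cos, ← ofReal_sin, Real.cos_two_mul, Real.sin_two_mul, Real.cos_sq']
  push_cast
  ring

theorem norm_sin_sub_cos_mul_I (θ : ℝ) : ‖(Real.sin θ : ℂ) - Real.cos θ * I‖ = 1 := by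
  have : (Real.sin θ : ℂ) - Real.cos θ * I = -I * exp (θ * I) := by
    rw [exp_mul_I, ← ofReal_cos, ← ofReal_sin]; ring_nf; rw [I_sq]; ring
  rw [this, norm_mul, norm_exp_ofReal_mul_I, norm_neg, norm_I, mul_one]

noncomputable def chordForce (f : ℝ → ℝ) (u v : ℂ) : ℂ := f ‖u - v‖ * ((u - v) / ‖u - v‖)

theorem chordForce_mul_exp (f : ℝ → ℝ) {w : ℂ} {R θ : ℝ} (hw : ‖w‖ = R) (hR : 0 < R)
    (hθ : 0 < Real.sin θ) :
    chordForce f w (w * exp (2 * θ * I)) =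
      w / R * (f (2 * R * Real.sin θ) * (Real.sin θ - Real.cos θ * I)) := by
  rw [chordForce]
  set d := w - w * exp (2 * θ * I)
  have hd : d = (2 * R * Real.sin θ : ℝ) * (w / R * (Real.sin θ - Real.cos θ * I)) := by
    have hR' : (R : ℂ) ≠ 0 := by exact_mod_cast hR.ne'
    simp only [d, ← mul_one_sub, one_sub_exp_two_mul_I]
    push_cast
    field_simp
  have hnorm : ‖d‖ = 2 * R * Real.sin θ := by
    rw [hd, norm_mul, norm_mul, norm_sin_sub_cos_mul_I, norm_div, hw, norm_real,
      Real.norm_of_nonneg (by positivity), Complex.norm_of_nonneg hR.le, div_self hR.ne',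
      mul_one, mul_one]
  have hpos : ((2 * R * Real.sin θ : ℝ) : ℂ) ≠ 0 := by
    exact_mod_cast (by positivity : 0 < 2 * R * Real.sin θ).ne'
  rw [hnorm, hd, mul_div_cancel_left₀ _ hpos]
  ring

theorem sum_Icc_mul_sin_sub_cos_mul_I (N : ℕ) (g : ℝ → ℝ) :
    ∑ p ∈ Icc 1 (N - 1), (g (Real.sin (p * π / N)) : ℂ) *
        (Real.sin (p * π / N) - Real.cos (p * π / N) * I) =
      ((∑ p ∈ Icc 1 (N - 1), Real.sin (p * π / N) * g (Real.sin (p * π / N)) : ℝ) : ℂ) := by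
  have hcos := congrArg (fun t : ℝ => (t : ℂ) * I) (sum_Icc_cos_mul_sin_eq_zero N g)
  simp only [ofReal_sum, ofReal_mul, sum_mul, ofReal_zero, zero_mul] at hcos
  rw [← sub_zero (ofReal _), ← hcos, ofReal_sum, ← sum_sub_distrib]
  refine sum_congr rfl fun p _ => ?_
  push_cast
  ring

theorem sin_pos_of_mem_Icc {N p : ℕ} (hp : p ∈ Icc 1 (N - 1)) : 0 < Real.sin (p * π / N) := by
  rw [mem_Icc] at hp
  have hN : (0 : ℝ) < N := by norm_cast; omega
  have hpN : (p : ℝ) < N := by norm_cast; omega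
  refine Real.sin_pos_of_pos_of_lt_pi (div_pos (mul_pos (by norm_cast; omega) pi_pos) hN) ?_
  rw [div_lt_iff₀ hN]
  nlinarith [Real.pi_pos]

noncomputable def polygonVertex (N : ℕ) (R : ℝ) (j : ℕ) : ℂ := R * exp (2 * π * I * j / N)

theorem norm_polygonVertex (N : ℕ) {R : ℝ} (hR : 0 ≤ R) (j : ℕ) : ‖polygonVertex N R j‖ = R := by
  rw [polygonVertex, norm_mul,
    show 2 * π * I * j / N = ((2 * π * j / N : ℝ) : ℂ) * I by push_cast; ring,
    norm_exp_ofReal_mul_I, Complex.norm_of_nonneg hR, mul_one]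

theorem polygonVertex_add (N : ℕ) (R : ℝ) (j p : ℕ) :
    polygonVertex N R (j + p) = polygonVertex N R j * exp (2 * (p * π / N : ℝ) * I) := by
  rw [polygonVertex, polygonVertex, mul_assoc (R : ℂ), ← Complex.exp_add]
  push_cast
  congr 2
  field_simp

theorem periodic_polygonVertex {N : ℕ} (hN : N ≠ 0) (R : ℝ) :
    Function.Periodic (polygonVertex N R) N := fun j => by
  have hN' : (N : ℂ) ≠ 0 := by exact_mod_cast hN
  rw [polygonVertex_add, show (2 * (N * π / N : ℝ) : ℂ) * I = 2 * π * I by push_cast; field_simp,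
    exp_two_pi_mul_I, mul_one]

theorem sum_erase_chordForce_polygonVertex {N : ℕ} {R : ℝ} (hR : 0 < R) (f : ℝ → ℝ) {j : ℕ}
    (hj : j ∈ Icc 1 N) :
    ∑ l ∈ (Icc 1 N).erase j, chordForce f (polygonVertex N R j) (polygonVertex N R l) =
      polygonVertex N R j / R * ((∑ p ∈ Icc 1 (N - 1),
        Real.sin (p * π / N) * f (2 * R * Real.sin (p * π / N)) : ℝ) : ℂ) := by
  have hN : N ≠ 0 := by rw [mem_Icc] at hj; omega
  refine (((periodic_polygonVertex hN R).comp
    (chordForce f (polygonVertex N R j))).sum_erase_Icc hj).trans ?_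
  simp only [Function.comp_apply, polygonVertex_add]
  rw [sum_congr rfl fun p hp =>
      chordForce_mul_exp f (norm_polygonVertex N hR.le j) hR (sin_pos_of_mem_Icc hp),
    ← mul_sum, sum_Icc_mul_sin_sub_cos_mul_I N fun s => f (2 * R * s)]

theorem stmt_19_general (N : ℕ) (hN : 2 ≤ N) (R : ℝ) (hR : 0 < R)
    (kd : ℝ → ℝ)
    (x : ℕ → ℂ)
    (hx : ∀ j : ℕ, x j = (R : ℂ) * Complex.exp (2 * π * Complex.I * j / N)) :
    (∀ j ∈ Finset.Icc 1 N,
        ∑ l ∈ (Finset.Icc 1 N).erase j,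
          (kd ‖x j - x l‖ : ℂ) *
            ((x j - x l) / (‖x j - x l‖ : ℂ)) = 0)
      ↔ ∑ p ∈ Finset.Icc 1 (N - 1),
          Real.sin ((p : ℝ) * π / N) * kd (2 * R * Real.sin ((p : ℝ) * π / N)) = 0 := by
  obtain rfl : x = polygonVertex N R := funext hx
  have hvertex : polygonVertex N R 1 / R ≠ 0 := by
    rw [div_ne_zero_iff, ← norm_ne_zero_iff, norm_polygonVertex N hR.le]
    exact ⟨hR.ne', by exact_mod_cast hR.ne'⟩
  constructor
  · intro h
    have hmem : 1 ∈ Icc 1 N := mem_Icc.2 ⟨le_rfl, by omega⟩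
    have h1 := (sum_erase_chordForce_polygonVertex hR kd hmem).symm.trans (h 1 hmem)
    exact_mod_cast (mul_eq_zero.1 h1).resolve_left hvertex
  · intro h j hj
    exact (sum_erase_chordForce_polygonVertex hR kd hj).trans (by rw [h, ofReal_zero, mul_zero])

theorem stmt_19 (N : ℕ) (hN : 2 ≤ N) (R : ℝ) (hR : 0 < R)
    (k kd : ℝ → ℝ) (hk : ∀ r : ℝ, 0 < r → HasDerivAt k (kd r) r)
    (x : ℕ → ℂ)
    (hx : ∀ j : ℕ, x j = (R : ℂ) * Complex.exp (2 * π * Complex.I * j / N)) :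
    (∀ j ∈ Finset.Icc 1 N,
        ∑ l ∈ (Finset.Icc 1 N).erase j,
          (kd ‖x j - x l‖ : ℂ) *
            ((x j - x l) / (‖x j - x l‖ : ℂ)) = 0)
      ↔ ∑ p ∈ Finset.Icc 1 (N - 1),
          Real.sin ((p : ℝ) * π / N) * kd (2 * R * Real.sin ((p : ℝ) * π / N)) = 0 :=
  stmt_19_general N hN R hR kd x hx
end
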